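/- Let d ≥ 1 be an integer, κ > 0, c > 2dκ, R ≥ 1, and let ξ : Q_R → [0,∞) be a potential with ξ(0) − max_{x ∈ Q_R, x ≠ 0} ξ(x) > c. For * ∈ {f, 0}, let e_1^{R,*} be the nonnegative ℓ²-normalized eigenfunction of H_R^* = κΔ_R^* + ξ corresponding to its largest eigenvalue. Then, with K := 1/(1 − 2dκ/c), for every x ∈ Q_R: e_1^{R,*}(x) ≤ K · exp(−|x|₁ · log(c/(2dκ))). -/

import Mathlib

open MeasureTheory ProbabilityTheory Filter Asymptotics Real Matrix
open scoped BigOperators ENNReal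

noncomputable section

/-- The centered lattice cube `Q_R = [-⌈R⌉,⌈R⌉]^d ∩ ℤ^d`. -/
def cube (d : ℕ) (R : ℝ) : Finset (Fin d → ℤ) :=
  Fintype.piFinset fun _ => Finset.Icc (-(⌈R⌉ : ℤ)) ⌈R⌉

/-- The ℓ¹-norm on `ℤ^d`. -/
def norm1 {d : ℕ} (x : Fin d → ℤ) : ℤ := ∑ i, |x i|

/-- Number of nearest neighbours of `x` inside the cube `Q_R`. -/
def degIn (d : ℕ) (R : ℝ) (x : Fin d → ℤ) : ℕ :=
  ((cube d R).filter fun y => norm1 (x - y) = 1).card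

/-- The Anderson Hamiltonian `κ Δ_R^* + ξ` on `ℓ²(Q_R)`, with free boundary
conditions if `free = true` and zero boundary conditions if `free = false`,
written as a matrix.  Off-diagonal entries are `κ` for nearest neighbours in
the cube; the diagonal entry at `x` is `ξ(x) - κ·deg(x)` where `deg(x)` is the
number of neighbours of `x` inside the cube (free b.c.) resp. `2d` (zero b.c.,
i.e. the function is extended by `0` outside the cube). -/
def ham (d : ℕ) (κ R : ℝ) (ξ : (Fin d → ℤ) → ℝ) (free : Bool) :
    Matrix (cube d R) (cube d R) ℝ :=
  Matrix.of fun x y =>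
    (if norm1 ((x : Fin d → ℤ) - (y : Fin d → ℤ)) = 1 then κ else 0) +
    (if x = y then ξ (x : Fin d → ℤ) -
      κ * (if free then (degIn d R (x : Fin d → ℤ) : ℝ) else (2 * d : ℝ)) else 0)

/-- `λ_1^{R,*}(ξ)`, the largest eigenvalue of the Anderson Hamiltonian. -/
def lam1 (d : ℕ) (κ R : ℝ) (ξ : (Fin d → ℤ) → ℝ) (free : Bool) : ℝ :=
  sSup (spectrum ℝ (ham d κ R ξ free))

/-- `ξ^{(1)}_R`, the maximum of the potential over the cube `Q_R`. -/
def xiMax (d : ℕ) (R : ℝ) (ξ : (Fin d → ℤ) → ℝ) : ℝ :=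
  sSup (ξ '' (cube d R : Set (Fin d → ℤ)))

/-- `ξ̂_R`, the maximum of the potential over the punctured cube `Q_R \ {0}`. -/
def xiHat (d : ℕ) (R : ℝ) (ξ : (Fin d → ℤ) → ℝ) : ℝ :=
  sSup (ξ '' ((cube d R : Set (Fin d → ℤ)) \ {0}))

/-- `ξ^{(2)}_R`, the second largest value of the potential on the cube `Q_R`
(as the maximum over distinct pairs of sites of the minimum of the two values). -/
def xiSecond (d : ℕ) (R : ℝ) (ξ : (Fin d → ℤ) → ℝ) : ℝ :=
  sSup ((fun p => min (ξ p.1) (ξ p.2)) ''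
    ((cube d R).offDiag : Set ((Fin d → ℤ) × (Fin d → ℤ))))

/-- The box solution `u_R^*(t,·) = exp(t H_R^*) 𝟙` of the parabolic Anderson
problem on `Q_R` with initial condition `𝟙` (free b.c. if `free = true`,
zero b.c. if `free = false`), extended by `0` outside the cube. -/
def boxSol (d : ℕ) (κ : ℝ) (ξ : (Fin d → ℤ) → ℝ) (free : Bool) (R t : ℝ)
    (x : Fin d → ℤ) : ℝ :=
  if hx : x ∈ cube d R then
    ((NormedSpace.exp (t • ham d κ R ξ free)) *ᵥ (fun _ => 1)) ⟨x, hx⟩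
  else 0

/-- The Feynman–Kac solution of the PAM with homogeneous initial condition
`u_0 ≡ 1`: the increasing limit of the zero-boundary box solutions. -/
def pamSol (d : ℕ) (κ : ℝ) (ξ : (Fin d → ℤ) → ℝ) (t : ℝ) (x : Fin d → ℤ) : ℝ :=
  ⨆ n : ℕ, boxSol d κ ξ false (n + 1) t x

/-- The cumulant generating function `H(t) = log⟨exp(t ξ(0))⟩`. -/
def cgfH {Ω : Type*} [MeasurableSpace Ω] (P : Measure Ω)
    {d : ℕ} (ξ : Ω → (Fin d → ℤ) → ℝ) (t : ℝ) : ℝ :=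
  Real.log (∫ ω, Real.exp (t * ξ ω 0) ∂P)

/-- The tail of the potential: `F̄(h) = P(ξ(0) > h)`. -/
def tailP {Ω : Type*} [MeasurableSpace Ω] (P : Measure Ω)
    {d : ℕ} (ξ : Ω → (Fin d → ℤ) → ℝ) (h : ℝ) : ℝ :=
  (P {ω | h < ξ ω 0}).toReal

/-- Conditional probability `P(A|B) = P(A ∩ B)/P(B)`, as a real number. -/
def cPr {Ω : Type*} [MeasurableSpace Ω] (P : Measure Ω) (A B : Set Ω) : ℝ :=
  (P (A ∩ B)).toReal / (P B).toReal

/-- Conditional expectation `⟨X | B⟩ = ⟨X 1_B⟩ / P(B)`, as a real number. -/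
def cEx {Ω : Type*} [MeasurableSpace Ω] (P : Measure Ω) (X : Ω → ℝ) (B : Set Ω) : ℝ :=
  (∫ ω in B, X ω ∂P) / (P B).toReal

/-- A positive function is slowly varying at infinity. -/
def SlowlyVarying (L : ℝ → ℝ) : Prop :=
  ∀ lam : ℝ, 0 < lam → Tendsto (fun x => L (lam * x) / L x) atTop (nhds 1)

/-- The class `𝓕` of `C¹` functions `f` with `f(0) = 0`, `f' > 0` on `(0,∞)`,
which are regularly varying of some positive index `β`, `f(x) = x^β L(x)`,
with slowly varying part `L` non-decreasing or bounded away from `0` and `∞`. -/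
def MemF (f : ℝ → ℝ) : Prop :=
  ContDiff ℝ 1 f ∧ f 0 = 0 ∧ (∀ x > (0:ℝ), 0 < deriv f x) ∧
  ∃ β > (0:ℝ), ∃ L : ℝ → ℝ, SlowlyVarying L ∧
    (∀ x > (0:ℝ), f x = x ^ β * L x) ∧
    (MonotoneOn L (Set.Ioi 0) ∨ ∃ m M : ℝ, 0 < m ∧ ∀ x > (0:ℝ), m ≤ L x ∧ L x ≤ M)

/-- The class `𝒯` of `C¹` time-scale functions: `t(0) = 0`, `t' > 0` on
`(0,∞)` and `t(x) → ∞`. -/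
def MemT (τ : ℝ → ℝ) : Prop :=
  ContDiff ℝ 1 τ ∧ τ 0 = 0 ∧ (∀ x > (0:ℝ), 0 < deriv τ x) ∧ Tendsto τ atTop atTop

/-- The growth condition (1.3): for all `a ≥ 0`,
`max_j e^{t_j(t) a} = o(min_i ⟨f_i(e^{t_i(t) ξ(0)})⟩)` as `t → ∞`
(stated pairwise, which is equivalent for finitely many indices). -/
def GrowthCond {Ω : Type*} [MeasurableSpace Ω] (P : Measure Ω) {d : ℕ}
    (ξ : Ω → (Fin d → ℤ) → ℝ) {p : ℕ} (f τ : Fin p → ℝ → ℝ) : Prop :=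
  ∀ a ≥ (0:ℝ), ∀ j i : Fin p,
    (fun t => Real.exp (τ j t * a)) =o[atTop]
      (fun t => ∫ ω, f i (Real.exp (τ i t * ξ ω 0)) ∂P)

/-- `R_t = t·(log t)²`. -/
def Rt (t : ℝ) : ℝ := t * (Real.log t) ^ 2

/-- A positive function `g` with `g(t) = o(t)` is self-neglecting if
`g(t + a g(t)) ~ g(t)` as `t → ∞`, locally uniformly in `a ∈ (0,∞)`. -/
def SelfNeglecting (g : ℝ → ℝ) : Prop :=
  g =o[atTop] (fun t => t) ∧
  ∀ K : Set ℝ, IsCompact K → K ⊆ Set.Ioi 0 →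
    TendstoUniformlyOn (fun t a => g (t + a * g t) / g t) (fun _ => 1) atTop K

/-- Pearson correlation coefficient of two random variables. -/
def pearson {Ω : Type*} [MeasurableSpace Ω] (P : Measure Ω) (X Y : Ω → ℝ) : ℝ :=
  (∫ ω, (X ω - ∫ x, X x ∂P) * (Y ω - ∫ x, Y x ∂P) ∂P) /
    Real.sqrt ((∫ ω, (X ω - ∫ x, X x ∂P) ^ 2 ∂P) * (∫ ω, (Y ω - ∫ x, Y x ∂P) ^ 2 ∂P))

/-! The eigenvalue equation at `x` reads
`(λ - ξ(x) + κ deg(x)) e(x) = κ ∑_{y ∼ x} e(y)`.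
At the origin, where `e(0) > 0` by connectedness, it gives `λ ≥ ξ(0) - 2dκ`. Away from the
origin the gap then makes the coefficient on the left at least `c - 2dκ + κ deg(x)`, so `e(x)`
is at most `ρ = 2dκ/c` times the largest value of `e` at a neighbour. Induction on `|x|₁`,
starting from `e ≤ 1`, yields `e(x) ≤ ρ^{|x|₁}`. -/

section GraphDecay

variable {ι : Type*} (nbr : ι → Finset ι) (r : ι → ℕ)

theorem le_pow_of_local_contraction (hr : ∀ z, ∀ y ∈ nbr z, r z ≤ r y + 1) {e : ι → ℝ}
    (he : ∀ z, e z ≤ 1) {ρ : ℝ} (hρ : 0 ≤ ρ)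
    (hcontr : ∀ z, r z ≠ 0 → ∀ M, 0 ≤ M → (∀ y ∈ nbr z, e y ≤ M) → e z ≤ ρ * M)
    (z : ι) : e z ≤ ρ ^ r z := by
  suffices ∀ n z, n ≤ r z → e z ≤ ρ ^ n from this _ z le_rfl
  intro n
  induction n with
  | zero => simpa using he
  | succ n ih =>
    intro z hz
    rw [pow_succ']
    exact hcontr z (by omega) _ (pow_nonneg hρ n) fun y hy => ih y (by have := hr z y hy; omega)

theorem eq_zero_of_zero_spreads (hstep : ∀ z, r z ≠ 0 → ∃ y, z ∈ nbr y ∧ r y < r z)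
    {e : ι → ℝ} (hprop : ∀ y, e y = 0 → ∀ z ∈ nbr y, e z = 0)
    (hzero : ∀ z, r z = 0 → e z = 0) (z : ι) : e z = 0 := by
  induction hz : r z using Nat.strong_induction_on generalizing z with
  | _ n ih =>
    rcases Nat.eq_zero_or_pos n with rfl | hn
    · exact hzero z hz
    obtain ⟨y, hzy, hy⟩ := hstep z (by omega)
    exact hprop y (ih _ (hz ▸ hy) y rfl) z hzy

end GraphDecay

section Norm1

variable {d : ℕ}

theorem norm1_nonneg (x : Fin d → ℤ) : 0 ≤ norm1 x :=
  Finset.sum_nonneg fun _ _ => abs_nonneg _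

theorem norm1_eq_zero {x : Fin d → ℤ} : norm1 x = 0 ↔ x = 0 := by
  simp [norm1, funext_iff, Finset.sum_eq_zero_iff_of_nonneg]

theorem toNat_norm1_eq_zero {x : Fin d → ℤ} : (norm1 x).toNat = 0 ↔ x = 0 := by
  rw [← norm1_eq_zero]
  have := norm1_nonneg x
  omega

theorem norm1_sub_comm (x y : Fin d → ℤ) : norm1 (x - y) = norm1 (y - x) := by
  simp only [norm1, Pi.sub_apply, abs_sub_comm]

theorem norm1_le_norm1_add_norm1_sub (x y : Fin d → ℤ) :
    norm1 x ≤ norm1 y + norm1 (x - y) := by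
  rw [norm1, norm1, norm1, ← Finset.sum_add_distrib]
  exact Finset.sum_le_sum fun i _ => by simpa using abs_add_le (y i) ((x - y) i)

theorem norm1_single (i : Fin d) (s : ℤ) : norm1 (Pi.single i s) = |s| := by
  simp [norm1, Pi.single_apply, apply_ite (abs : ℤ → ℤ)]

theorem exists_eq_single_of_norm1_eq_one {w : Fin d → ℤ} (hw : norm1 w = 1) :
    ∃ i, w = Pi.single i (w i) ∧ |w i| = 1 := by
  obtain ⟨i, -, hi⟩ := Finset.exists_ne_zero_of_sum_ne_zero (hw.trans_ne one_ne_zero)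
  have hsplit := Finset.add_sum_erase Finset.univ (fun j => |w j|) (Finset.mem_univ i)
  have hrest : ∑ j ∈ Finset.univ.erase i, |w j| = 0 := by
    have := Int.one_le_abs (abs_ne_zero.1 hi)
    have := Finset.sum_nonneg fun j (_ : j ∈ Finset.univ.erase i) => abs_nonneg (w j)
    rw [norm1] at hw
    omega
  refine ⟨i, funext fun j => ?_, by rw [norm1, ← hsplit, hrest] at hw; simpa using hw⟩
  rcases eq_or_ne j i with rfl | hji
  · simp
  · simpa [hji] using (Finset.sum_eq_zero_iff_of_nonneg fun j _ => abs_nonneg (w j)).1 hrest j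
      (Finset.mem_erase.2 ⟨hji, Finset.mem_univ j⟩)

theorem card_filter_norm1_sub_eq_one_le (s : Finset (Fin d → ℤ)) (x : Fin d → ℤ) :
    (s.filter fun y => norm1 (x - y) = 1).card ≤ 2 * d := by
  classical
  have hsub : (s.filter fun y => norm1 (x - y) = 1) ⊆
      (Finset.univ ×ˢ {1, -1}).image fun p : Fin d × ℤ => x - Pi.single p.1 p.2 := by
    intro y hy
    obtain ⟨i, hi, hi1⟩ := exists_eq_single_of_norm1_eq_one (Finset.mem_filter.1 hy).2
    refine Finset.mem_image.2 ⟨(i, (x - y) i), ?_, by rw [← hi, sub_sub_cancel]⟩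
    simpa [abs_eq zero_le_one] using hi1
  calc _ ≤ _ := Finset.card_le_card hsub
    _ ≤ (Finset.univ ×ˢ ({1, -1} : Finset ℤ)).card := Finset.card_image_le
    _ = 2 * d := by simp [mul_comm]

end Norm1

section Cube

variable {d : ℕ} {R : ℝ}

theorem mem_cube_iff_abs_le {x : Fin d → ℤ} : x ∈ cube d R ↔ ∀ i, |x i| ≤ ⌈R⌉ := by
  simp [cube, Fintype.mem_piFinset, abs_le]

theorem zero_mem_cube (hR : 0 ≤ R) : (0 : Fin d → ℤ) ∈ cube d R :=
  mem_cube_iff_abs_le.2 fun _ => by simpa using Int.ceil_nonneg hR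

theorem exists_mem_cube_norm1_sub_eq_one_norm1_lt {z : Fin d → ℤ} (hz : z ∈ cube d R)
    (hz0 : z ≠ 0) : ∃ y ∈ cube d R, norm1 (y - z) = 1 ∧ norm1 y < norm1 z := by
  obtain ⟨i, hi : z i ≠ 0⟩ := Function.ne_iff.1 hz0
  have hsign : |z i - (z i).sign| + |(z i).sign| = |z i| := by
    rcases lt_or_gt_of_ne hi with h | h
    · simp [Int.sign_eq_neg_one_of_neg h, abs_of_neg h,
        abs_of_nonpos (show z i + 1 ≤ 0 by omega)]
    · simp [Int.sign_eq_one_of_pos h, abs_of_pos h, abs_of_nonneg (show 0 ≤ z i - 1 by omega)]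
  set y := z - Pi.single i (z i).sign
  have hy : ∀ j, |y j| + |(Pi.single i (z i).sign : Fin d → ℤ) j| = |z j| := by
    intro j
    rcases eq_or_ne j i with rfl | hji
    · simpa [y] using hsign
    · simp [y, hji]
  have hnorm : norm1 y + 1 = norm1 z := by
    rw [← Int.abs_sign_of_ne_zero hi, ← norm1_single, norm1, norm1, norm1,
      ← Finset.sum_add_distrib]
    exact Finset.sum_congr rfl fun j _ => hy j
  refine ⟨y, mem_cube_iff_abs_le.2 fun j => ?_, ?_, by omega⟩
  · linarith [hy j, mem_cube_iff_abs_le.1 hz j,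
      abs_nonneg ((Pi.single i (z i).sign : Fin d → ℤ) j)]
  · rw [norm1_sub_comm, sub_sub_cancel, norm1_single, Int.abs_sign_of_ne_zero hi]

theorem degIn_le (x : Fin d → ℤ) : degIn d R x ≤ 2 * d :=
  card_filter_norm1_sub_eq_one_le _ x

theorem le_xiHat (ξ : (Fin d → ℤ) → ℝ) {x : Fin d → ℤ} (hx : x ∈ cube d R) (hx0 : x ≠ 0) :
    ξ x ≤ xiHat d R ξ :=
  le_csSup (((cube d R).finite_toSet.sdiff).image ξ).bddAbove ⟨x, ⟨hx, hx0⟩, rfl⟩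

def cubeNbrs (x : cube d R) : Finset (cube d R) :=
  Finset.univ.filter fun y => norm1 ((x : Fin d → ℤ) - (y : Fin d → ℤ)) = 1

def hamDeg (d : ℕ) (R : ℝ) (free : Bool) (x : Fin d → ℤ) : ℝ :=
  if free then (degIn d R x : ℝ) else (2 * d : ℝ)

theorem card_cubeNbrs_le_degIn (x : cube d R) : (cubeNbrs x).card ≤ degIn d R x :=
  Finset.card_le_card_of_injOn Subtype.val
    (fun y hy => Finset.mem_filter.2 ⟨y.2, (Finset.mem_filter.1 hy).2⟩)
    (fun _ _ _ _ h => Subtype.ext h)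

theorem card_cubeNbrs_le_hamDeg (free : Bool) (x : cube d R) :
    ((cubeNbrs x).card : ℝ) ≤ hamDeg d R free x := by
  have h := card_cubeNbrs_le_degIn x
  cases free
  · simpa [hamDeg] using (Nat.cast_le (α := ℝ)).2 (h.trans (degIn_le _))
  · simpa [hamDeg] using h

theorem hamDeg_nonneg (free : Bool) (x : Fin d → ℤ) : 0 ≤ hamDeg d R free x := by
  unfold hamDeg; split <;> positivity

theorem hamDeg_le (free : Bool) (x : Fin d → ℤ) : hamDeg d R free x ≤ 2 * d := by
  unfold hamDeg
  split
  · exact_mod_cast degIn_le x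
  · exact le_rfl

end Cube

theorem ham_mulVec_apply {d : ℕ} (κ R : ℝ) (ξ : (Fin d → ℤ) → ℝ) (free : Bool)
    (e : cube d R → ℝ) (x : cube d R) :
    (ham d κ R ξ free *ᵥ e) x =
      κ * ∑ y ∈ cubeNbrs x, e y + (ξ x - κ * hamDeg d R free x) * e x := by
  simp only [ham, hamDeg, cubeNbrs, mulVec, dotProduct, of_apply, add_mul, ite_mul, mul_ite,
    zero_mul, mul_zero, Finset.sum_add_distrib, Finset.sum_ite_eq, Finset.mem_univ, if_true,
    Finset.mul_sum, Finset.sum_filter]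

section Eigenvector

variable {d : ℕ} {κ R lam : ℝ} {ξ : (Fin d → ℤ) → ℝ} {free : Bool} {e : cube d R → ℝ}

theorem eigen_balance (heig : ham d κ R ξ free *ᵥ e = lam • e) (x : cube d R) :
    (lam - ξ x + κ * hamDeg d R free x) * e x = κ * ∑ y ∈ cubeNbrs x, e y := by
  have h := congrFun heig x
  rw [ham_mulVec_apply, Pi.smul_apply, smul_eq_mul] at h
  linear_combination -h

theorem apply_zero_pos (hκ : 0 < κ) (heig : ham d κ R ξ free *ᵥ e = lam • e)
    (hpos : ∀ x, 0 ≤ e x) (hne : e ≠ 0) (h0 : (0 : Fin d → ℤ) ∈ cube d R) :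
    0 < e ⟨0, h0⟩ := by
  refine (hpos _).lt_of_ne' fun he0 => hne (funext fun z => ?_)
  refine eq_zero_of_zero_spreads cubeNbrs (fun x => (norm1 (x : Fin d → ℤ)).toNat)
    (fun z hz => ?_) (fun y hy z hz => ?_) (fun z hz => ?_) z
  · obtain ⟨y, hy, hyz, hlt⟩ := exists_mem_cube_norm1_sub_eq_one_norm1_lt z.2
      (mt toNat_norm1_eq_zero.2 hz)
    exact ⟨⟨y, hy⟩, Finset.mem_filter.2 ⟨Finset.mem_univ _, hyz⟩,
      show (norm1 y).toNat < _ by omega⟩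
  · have hsum : ∑ w ∈ cubeNbrs y, e w = 0 := by
      simpa [hy, hκ.ne'] using (eigen_balance heig y).symm
    exact (Finset.sum_eq_zero_iff_of_nonneg fun w _ => hpos w).1 hsum z hz
  · rwa [show z = ⟨0, h0⟩ from Subtype.ext (toNat_norm1_eq_zero.1 hz)]

theorem le_eigenvalue_of_pos (hκ : 0 ≤ κ) (heig : ham d κ R ξ free *ᵥ e = lam • e)
    (hpos : ∀ x, 0 ≤ e x) {x : cube d R} (hx : 0 < e x) : ξ x - 2 * d * κ ≤ lam := by
  have hcoef : 0 ≤ lam - ξ x + κ * hamDeg d R free x := by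
    refine nonneg_of_mul_nonneg_left ?_ hx
    rw [eigen_balance heig]
    exact mul_nonneg hκ (Finset.sum_nonneg fun y _ => hpos y)
  nlinarith [hamDeg_le (R := R) free (x : Fin d → ℤ)]

theorem le_mul_of_forall_nbr_le (hκ : 0 ≤ κ) {c : ℝ} (hc : 2 * d * κ < c)
    (heig : ham d κ R ξ free *ᵥ e = lam • e) (hpos : ∀ x, 0 ≤ e x) {z : cube d R}
    (hgap : c - 2 * d * κ ≤ lam - ξ z) {M : ℝ} (hM : 0 ≤ M)
    (hnbr : ∀ y ∈ cubeNbrs z, e y ≤ M) :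
    e z ≤ 2 * d * κ / c * M := by
  set D := hamDeg d R free z
  have hD := hamDeg_le (R := R) free (z : Fin d → ℤ)
  have hD0 := hamDeg_nonneg (R := R) free (z : Fin d → ℤ)
  have hc0 : 0 < c := by nlinarith
  have hA : 0 < c - 2 * d * κ + κ * D := by nlinarith
  have hsum : ∑ y ∈ cubeNbrs z, e y ≤ D * M := calc
    _ ≤ ∑ _y ∈ cubeNbrs z, M := Finset.sum_le_sum hnbr
    _ = (cubeNbrs z).card * M := by rw [Finset.sum_const, nsmul_eq_mul]
    _ ≤ D * M := mul_le_mul_of_nonneg_right (card_cubeNbrs_le_hamDeg free z) hM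
  -- `κ D ≤ (c - 2dκ + κ D) ρ` is equivalent to `(c - 2dκ) (2d - D) κ ≥ 0`.
  have hκD : κ * D ≤ (c - 2 * d * κ + κ * D) * (2 * d * κ / c) := by
    rw [mul_div_assoc', le_div_iff₀ hc0]
    nlinarith [mul_nonneg (mul_nonneg (sub_nonneg.2 hc.le) (sub_nonneg.2 hD)) hκ]
  refine le_of_mul_le_mul_left ?_ hA
  calc (c - 2 * d * κ + κ * D) * e z ≤ (lam - ξ z + κ * D) * e z := by gcongr; exact hpos z
    _ = κ * ∑ y ∈ cubeNbrs z, e y := eigen_balance heig z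
    _ ≤ κ * D * M := by rw [mul_assoc]; exact mul_le_mul_of_nonneg_left hsum hκ
    _ ≤ (c - 2 * d * κ + κ * D) * (2 * d * κ / c * M) := by
      rw [← mul_assoc]; exact mul_le_mul_of_nonneg_right hκD hM

end Eigenvector

theorem le_one_of_sum_sq_eq_one {ι : Type*} [Fintype ι] {e : ι → ℝ} (h : ∑ x, e x ^ 2 = 1)
    (x : ι) : e x ≤ 1 :=
  (le_abs_self _).trans <| (sq_le_one_iff_abs_le_one _).1 <|
    h ▸ Finset.single_le_sum (fun y _ => sq_nonneg (e y)) (Finset.mem_univ x)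

theorem exp_neg_mul_log_div (n : ℕ) {a b : ℝ} (ha : 0 < a) (hb : 0 < b) :
    Real.exp (-(n : ℝ) * Real.log (a / b)) = (b / a) ^ n := by
  rw [neg_mul, ← mul_neg, ← Real.log_inv, inv_div, Real.exp_nat_mul,
    Real.exp_log (div_pos hb ha)]

theorem stmt4_general (d : ℕ) (hd : 1 ≤ d) (κ R c : ℝ) (hκ : 0 < κ) (hR : 1 ≤ R)
    (hc : 2 * d * κ < c)
    (ξ : (Fin d → ℤ) → ℝ)
    (hgap : c < ξ 0 - xiHat d R ξ)
    (free : Bool)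
    (e : (cube d R) → ℝ)
    (heig : (ham d κ R ξ free) *ᵥ e = lam1 d κ R ξ free • e)
    (hpos : ∀ x, 0 ≤ e x)
    (hnorm : ∑ x, (e x) ^ 2 = 1) :
    ∀ x : cube d R,
      e x ≤ (1 - 2 * d * κ / c)⁻¹ *
        Real.exp (-(norm1 (x : Fin d → ℤ) : ℝ) * Real.log (c / (2 * d * κ))) := by
  have h2dκ : 0 < 2 * d * κ := by positivity
  have hρ : 0 < 2 * d * κ / c := div_pos h2dκ (h2dκ.trans hc)
  have hρ1 : 2 * d * κ / c < 1 := (div_lt_one (h2dκ.trans hc)).2 hc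
  have h0 : (0 : Fin d → ℤ) ∈ cube d R := zero_mem_cube (by linarith)
  have hne : e ≠ 0 := fun h => by simp [h] at hnorm
  have hlam : ξ 0 - 2 * d * κ ≤ lam1 d κ R ξ free :=
    le_eigenvalue_of_pos hκ.le heig hpos (apply_zero_pos hκ heig hpos hne h0)
  intro x
  have hdecay : e x ≤ (2 * d * κ / c) ^ (norm1 (x : Fin d → ℤ)).toNat := by
    refine le_pow_of_local_contraction cubeNbrs (fun z => (norm1 (z : Fin d → ℤ)).toNat)
      (fun z y hy => ?_) (le_one_of_sum_sq_eq_one hnorm) hρ.le (fun z hz M hM hnbr => ?_) x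
    · have := norm1_le_norm1_add_norm1_sub (z : Fin d → ℤ) y
      rw [(Finset.mem_filter.1 hy).2] at this
      omega
    · have := le_xiHat ξ z.2 (mt toNat_norm1_eq_zero.2 hz)
      exact le_mul_of_forall_nbr_le hκ.le hc heig hpos (by linarith) hM hnbr
  have hx : ((norm1 (x : Fin d → ℤ) : ℤ) : ℝ) = ((norm1 (x : Fin d → ℤ)).toNat : ℕ) := by
    exact_mod_cast (Int.toNat_of_nonneg (norm1_nonneg _)).symm
  rw [hx, exp_neg_mul_log_div _ (h2dκ.trans hc) h2dκ]
  exact hdecay.trans <| le_mul_of_one_le_left (by positivity) <|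
    (one_le_inv₀ (by linarith)).2 (by linarith)

/-- If the potential has a gap `ξ(0) − max_{x ≠ 0} ξ(x) > c > 2dκ`,
then the nonnegative ℓ²-normalized principal eigenfunction of the Anderson
Hamiltonian (either boundary condition) decays exponentially:
`e_1^{R,*}(x) ≤ K e^{−|x|₁ log(c/(2dκ))}` with `K = 1/(1 − 2dκ/c)`. -/
theorem stmt4 (d : ℕ) (hd : 1 ≤ d) (κ R c : ℝ) (hκ : 0 < κ) (hR : 1 ≤ R)
    (hc : 2 * d * κ < c)
    (ξ : (Fin d → ℤ) → ℝ) (hnn : ∀ x, 0 ≤ ξ x)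
    (hgap : c < ξ 0 - xiHat d R ξ)
    (free : Bool)
    (e : (cube d R) → ℝ)
    (heig : (ham d κ R ξ free) *ᵥ e = lam1 d κ R ξ free • e)
    (hpos : ∀ x, 0 ≤ e x)
    (hnorm : ∑ x, (e x) ^ 2 = 1) :
    ∀ x : cube d R,
      e x ≤ (1 - 2 * d * κ / c)⁻¹ *
        Real.exp (-(norm1 (x : Fin d → ℤ) : ℝ) * Real.log (c / (2 * d * κ))) :=
  stmt4_general d hd κ R c hκ hR hc ξ hgap free e heig hpos hnorm
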